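/- arXiv:1411.4218 — 3 statements merged into one kernel-verified Lean document; each statement's English description precedes it below -/
import Mathlib

section
/- Let f : ℝⁿ → ℝ be a convex function that is M-Lipschitz with respect to the Euclidean norm, and for τ > 0 define the smoothed function f_τ(x) = E[f(x + τ s̃)], where s̃ is uniformly distributed on the closed Euclidean unit ball. Then f_τ is convex and for every x one has 0 ≤ f_τ(x) − f(x) ≤ M τ. -/
/-!
Averaging translates `x ↦ f (x + τ s)` preserves convexity. The uniform measure on the ball is
symmetric, so its mean is `0` and Jensen's inequality gives `f x ≤ f_τ x`; since it lives on the
unit ball, every translate moves `f` by at most `M τ`, which gives the upper bound.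
-/

open MeasureTheory ProbabilityTheory Metric Set

theorem MeasureTheory.Measure.isNegInvariant_cond {G : Type*} [MeasurableSpace G] [AddGroup G]
    [MeasurableNeg G] (μ : Measure G) [μ.IsNegInvariant] {s : Set G}
    (hs : MeasurableSet s) (hs_neg : -s = s) : (μ[|s]).IsNegInvariant := by
  have h : (μ.restrict s).map Neg.neg = μ.restrict s := by
    conv_lhs => rw [← hs_neg, ← Set.neg_preimage]
    rw [← Measure.restrict_map measurable_neg hs, Measure.map_neg_eq_self]
  exact ⟨by rw [Measure.neg, ProbabilityTheory.cond, Measure.map_smul, h]⟩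

theorem integral_id_eq_zero_of_isNegInvariant {E : Type*} [NormedAddCommGroup E]
    [NormedSpace ℝ E] [MeasurableSpace E] [MeasurableNeg E] (μ : Measure E) [μ.IsNegInvariant] :
    ∫ x, x ∂μ = 0 := by
  have : IsAddTorsionFree E := .of_isTorsionFree ℝ E
  have h := integral_neg_eq_self (fun x : E => x) μ
  rwa [integral_neg, neg_eq_self] at h

theorem ContinuousOn.integrable_of_ae_mem_isCompact {X E : Type*} [TopologicalSpace X]
    [T2Space X] [MeasurableSpace X] [OpensMeasurableSpace X] [NormedAddCommGroup E]
    {μ : Measure X} [IsFiniteMeasureOnCompacts μ] {K : Set X} {g : X → E}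
    (hg : ContinuousOn g K) (hK : IsCompact K) (hμK : ∀ᵐ x ∂μ, x ∈ K) : Integrable g μ := by
  simpa [IntegrableOn, Measure.restrict_eq_self_of_ae_mem hμK] using
    hg.integrableOn_compact (μ := μ) hK

section

variable {E Ω : Type*} [NormedAddCommGroup E] [MeasurableSpace Ω]
  {μ : Measure Ω} {f : E → ℝ} {v : Ω → E}

theorem LipschitzWith.integral_comp_add_le [IsProbabilityMeasure μ] {K : NNReal}
    (hf : LipschitzWith K f) {r : ℝ} (hv : ∀ᵐ ω ∂μ, ‖v ω‖ ≤ r) (x : E)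
    (hint : Integrable (fun ω => f (x + v ω)) μ) :
    ∫ ω, f (x + v ω) ∂μ ≤ f x + K * r := by
  calc ∫ ω, f (x + v ω) ∂μ ≤ ∫ _, f x + K * r ∂μ := by
        refine integral_mono_ae hint (integrable_const _) (hv.mono fun ω hω => ?_)
        dsimp only
        have h := hf.dist_le_mul (x + v ω) x
        rw [Real.dist_eq, dist_self_add_left] at h
        linarith [le_abs_self (f (x + v ω) - f x), mul_le_mul_of_nonneg_left hω K.coe_nonneg]
    _ = f x + K * r := by simp

variable [NormedSpace ℝ E]

theorem ConvexOn.integral_comp_add (hf : ConvexOn ℝ univ f)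
    (hint : ∀ x, Integrable (fun ω => f (x + v ω)) μ) :
    ConvexOn ℝ univ (fun x => ∫ ω, f (x + v ω) ∂μ) := by
  refine ⟨convex_univ, fun x _ y _ a b ha hb hab => ?_⟩
  calc ∫ ω, f (a • x + b • y + v ω) ∂μ
      ≤ ∫ ω, a * f (x + v ω) + b * f (y + v ω) ∂μ :=
        integral_mono (hint _) (((hint x).const_mul a).add ((hint y).const_mul b))
          fun ω => (hf.translate_left (v ω)).2 trivial trivial ha hb hab
    _ = a • ∫ ω, f (x + v ω) ∂μ + b • ∫ ω, f (y + v ω) ∂μ := by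
        rw [integral_add ((hint x).const_mul a) ((hint y).const_mul b), integral_const_mul,
          integral_const_mul, smul_eq_mul, smul_eq_mul]

theorem ConvexOn.le_integral_comp_add [CompleteSpace E] [IsProbabilityMeasure μ]
    (hf : ConvexOn ℝ univ f) (hfc : Continuous f) (hv : Integrable v μ)
    (hv₀ : ∫ ω, v ω ∂μ = 0) (x : E) (hint : Integrable (fun ω => f (x + v ω)) μ) :
    f x ≤ ∫ ω, f (x + v ω) ∂μ := by
  have h := hf.map_integral_le hfc.continuousOn isClosed_univ (ae_of_all _ fun _ => trivial)
    ((integrable_const x).add hv) hint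
  simpa [integral_add (integrable_const x) hv, hv₀] using h

end

/-- Spherical (ball) smoothing of a convex Lipschitz function: convexity and
`0 ≤ f_τ(x) − f(x) ≤ M τ`. -/
theorem smoothing_lipschitz_bound (n : ℕ) (hn : 0 < n)
    (f : EuclideanSpace ℝ (Fin n) → ℝ) (M τ : ℝ) (hτ : 0 < τ)
    (hconv : ConvexOn ℝ Set.univ f)
    (hlip : ∀ x y, |f x - f y| ≤ M * ‖x - y‖)
    (μ : Measure (EuclideanSpace ℝ (Fin n)))
    (hμ : μ = (volume (Metric.closedBall (0 : EuclideanSpace ℝ (Fin n)) 1))⁻¹ •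
      volume.restrict (Metric.closedBall (0 : EuclideanSpace ℝ (Fin n)) 1))
    (fτ : EuclideanSpace ℝ (Fin n) → ℝ)
    (hfτ : ∀ x, fτ x = ∫ s, f (x + τ • s) ∂μ) :
    ConvexOn ℝ Set.univ fτ ∧ ∀ x, 0 ≤ fτ x - f x ∧ fτ x - f x ≤ M * τ := by
  set B := closedBall (0 : EuclideanSpace ℝ (Fin n)) 1
  have hμB : μ = volume[|B] := hμ
  have : IsProbabilityMeasure μ := hμB ▸ cond_isProbabilityMeasure_of_finite
    (measure_closedBall_pos volume 0 one_pos).ne' measure_closedBall_lt_top.ne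
  have : μ.IsNegInvariant := hμB ▸ Measure.isNegInvariant_cond volume measurableSet_closedBall
    (by rw [neg_closedBall, neg_zero])
  have hμB_ae : ∀ᵐ s ∂μ, s ∈ B := hμB ▸ ae_cond_mem measurableSet_closedBall
  have hM : 0 ≤ M := by
    have : Nonempty (Fin n) := ⟨⟨0, hn⟩⟩
    obtain ⟨x, y, hxy⟩ := exists_pair_ne (EuclideanSpace ℝ (Fin n))
    exact nonneg_of_mul_nonneg_left ((abs_nonneg _).trans (hlip x y))
      (norm_pos_iff.2 (sub_ne_zero.2 hxy))
  have hf : LipschitzWith M.toNNReal f :=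
    .of_dist_le' fun x y => by rw [Real.dist_eq, dist_eq_norm]; exact hlip x y
  have hint (x) : Integrable (fun s => f (x + τ • s)) μ :=
    (hf.continuous.comp (by fun_prop)).continuousOn.integrable_of_ae_mem_isCompact
      (isCompact_closedBall 0 1) hμB_ae
  obtain rfl : fτ = fun x => ∫ s, f (x + τ • s) ∂μ := funext hfτ
  refine ⟨hconv.integral_comp_add hint, fun x => ⟨?_, ?_⟩⟩
  · refine sub_nonneg.2 (hconv.le_integral_comp_add hf.continuous ?_ ?_ x (hint x))
    · exact (continuous_const_smul τ).continuousOn.integrable_of_ae_mem_isCompact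
        (isCompact_closedBall 0 1) hμB_ae
    · rw [integral_smul, integral_id_eq_zero_of_isNegInvariant, smul_zero]
  · have hτs : ∀ᵐ s ∂μ, ‖τ • s‖ ≤ τ := hμB_ae.mono fun s hs => by
      rw [norm_smul, Real.norm_of_nonneg hτ.le]
      exact mul_le_of_le_one_right hτ.le (mem_closedBall_zero_iff.1 hs)
    have h := hf.integral_comp_add_le hτs x (hint x)
    rw [Real.coe_toNNReal _ hM] at h
    linarith
end

section
/- (Conjugate duality of smoothness and strong convexity) If f : ℝⁿ → ℝ is μ-strongly convex (μ > 0) with respect to the Euclidean norm, then its Legendre–Fenchel conjugate f*(y) = sup_x (⟨y,x⟩ − f(x)) is differentiable everywhere and ∇f* is (1/μ)-Lipschitz: ‖∇f*(y₁) − ∇f*(y₂)‖₂ ≤ (1/μ)‖y₁ − y₂‖₂. -/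
/-!
For each `y` the tilted function `x ↦ f x - ⟪y, x⟫` is again `μ`-strongly convex, hence coercive,
so it has a minimiser `G y`, and `f* y = ⟪y, G y⟫ - f (G y)`. Strong convexity gives quadratic
growth `μ/2 ‖x - G y‖²` around this minimiser; adding the growth inequalities for `y₁` at `G y₂`
and for `y₂` at `G y₁` shows `μ ‖G y₁ - G y₂‖² ≤ ⟪y₁ - y₂, G y₁ - G y₂⟫`, so `G` is
`(1/μ)`-Lipschitz. By the Fenchel–Young inequality `G y` is a subgradient of `f*` at `y`, and a
function admitting a continuous choice of subgradients is differentiable with that gradient.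
-/

open Set Filter Topology
open scoped RealInnerProductSpace

section NormedSpace

variable {E : Type*} [NormedAddCommGroup E] [NormedSpace ℝ E]

lemma ConvexOn.add_norm_mul_le_of_forall_le {g : E → ℝ} {M : ℝ} (hg : ConvexOn ℝ univ g)
    (hM : ∀ z, ‖z‖ ≤ 1 → M ≤ g z) {x : E} (hx : 1 ≤ ‖x‖) :
    g 0 + ‖x‖ * (M - g 0) ≤ g x := by
  have hR : 0 < ‖x‖ := one_pos.trans_le hx
  have hunit : M ≤ g (‖x‖⁻¹ • x) :=
    hM _ (by rw [norm_smul, norm_inv, norm_norm, inv_mul_cancel₀ hR.ne'])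
  have hconv := hg.2 (mem_univ x) (mem_univ 0) (inv_nonneg.2 hR.le)
    (sub_nonneg.2 (inv_le_one_of_one_le₀ hx)) (add_sub_cancel _ _)
  rw [smul_zero, add_zero, smul_eq_mul, smul_eq_mul] at hconv
  have hscale : ‖x‖ * (‖x‖⁻¹ * g x + (1 - ‖x‖⁻¹) * g 0) = g x + (‖x‖ - 1) * g 0 := by
    field_simp
  have := mul_le_mul_of_nonneg_left (hunit.trans hconv) hR.le
  rw [hscale] at this
  linarith

lemma UniformConvexOn.add_le_of_isMinOn {s : Set E} {φ : ℝ → ℝ} {f : E → ℝ} {u x : E}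
    (hf : UniformConvexOn s φ f) (hu : IsMinOn f s u) (hus : u ∈ s) (hx : x ∈ s) :
    f u + φ ‖x - u‖ ≤ f x := by
  have hsegment : ∀ t ∈ Ioo (0 : ℝ) 1, f u + (1 - t) * φ ‖x - u‖ ≤ f x := by
    rintro t ⟨ht₀, ht₁⟩
    have hmin : f u ≤ f (t • x + (1 - t) • u) :=
      isMinOn_iff.1 hu _ (hf.1 hx hus ht₀.le (sub_nonneg.2 ht₁.le) (add_sub_cancel _ _))
    have hconv := hf.2 hx hus ht₀.le (sub_nonneg.2 ht₁.le) (add_sub_cancel _ _)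
    rw [smul_eq_mul, smul_eq_mul] at hconv
    refine le_of_mul_le_mul_left ?_ ht₀
    nlinarith
  have hlim : Tendsto (fun t : ℝ => f u + (1 - t) * φ ‖x - u‖) (𝓝[>] 0)
      (𝓝 (f u + φ ‖x - u‖)) := by
    have hcont : Continuous fun t : ℝ => f u + (1 - t) * φ ‖x - u‖ := by fun_prop
    simpa using (hcont.tendsto 0).mono_left nhdsWithin_le_nhds
  exact le_of_tendsto hlim (eventually_of_mem (Ioo_mem_nhdsGT one_pos) hsegment)

end NormedSpace

section InnerProductSpace

variable {E : Type*} [NormedAddCommGroup E] [InnerProductSpace ℝ E]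

lemma StrongConvexOn.sub_inner {s : Set E} {m : ℝ} {f : E → ℝ} (hf : StrongConvexOn s m f)
    (y : E) : StrongConvexOn s m fun x => f x - ⟪y, x⟫ := by
  have h := hf.sub (uniformConcaveOn_zero.2 ((innerₛₗ ℝ y).concaveOn hf.1))
  rw [add_zero] at h
  exact h

lemma StrongConvexOn.exists_forall_le [FiniteDimensional ℝ E] {m : ℝ} {f : E → ℝ}
    (hf : StrongConvexOn univ m f) (hm : 0 < m) : ∃ u, ∀ x, f u ≤ f x := by
  set g : E → ℝ := fun x => f x - m / 2 * ‖x‖ ^ 2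
  have hg : ConvexOn ℝ univ g := strongConvexOn_iff_convex.1 hf
  have hfcont : Continuous f :=
    continuousOn_univ.1 ((hf.convexOn fun r => by positivity).continuousOn isOpen_univ)
  have hgcont : Continuous g := continuousOn_univ.1 (hg.continuousOn isOpen_univ)
  obtain ⟨M, hM⟩ := (isCompact_closedBall (0 : E) 1).bddBelow_image hgcont.continuousOn
  have hMg : ∀ z, ‖z‖ ≤ 1 → M ≤ g z := fun z hz => hM ⟨z, mem_closedBall_zero_iff.2 hz, rfl⟩
  refine hfcont.exists_forall_le' 0 ?_
  -- beyond this radius `m / 2 * ‖x‖ ^ 2` outweighs the linear lower bound on `g`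
  filter_upwards [tendsto_norm_cocompact_atTop.eventually
    (eventually_ge_atTop (max 1 (2 * (g 0 - M) / m)))] with x hx
  have hgx := hg.add_norm_mul_le_of_forall_le hMg (le_of_max_le_left hx)
  have hlarge : 2 * (g 0 - M) / m ≤ ‖x‖ := le_of_max_le_right hx
  rw [div_le_iff₀ hm] at hlarge
  have hg0 : g 0 = f 0 := by simp [g]
  have hgx' : g x = f x - m / 2 * ‖x‖ ^ 2 := rfl
  rw [hg0, hgx'] at hgx
  rw [hg0] at hlarge
  nlinarith [mul_le_mul_of_nonneg_left hlarge (norm_nonneg x)]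

lemma norm_sub_le_of_quadratic_growth {f : E → ℝ} {G : E → E} {μ : ℝ} (hμ : 0 < μ)
    (hG : ∀ y x, f (G y) - ⟪y, G y⟫ + μ / 2 * ‖x - G y‖ ^ 2 ≤ f x - ⟪y, x⟫) (y₁ y₂ : E) :
    ‖G y₁ - G y₂‖ ≤ 1 / μ * ‖y₁ - y₂‖ := by
  have hmono : μ * ‖G y₁ - G y₂‖ ^ 2 ≤ ⟪y₁ - y₂, G y₁ - G y₂⟫ := by
    have h₁ := hG y₁ (G y₂)
    have h₂ := hG y₂ (G y₁)
    rw [norm_sub_rev] at h₁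
    simp only [inner_sub_left, inner_sub_right]
    linarith
  have hcs := hmono.trans (real_inner_le_norm _ _)
  rw [div_mul_eq_mul_div, one_mul, le_div_iff₀ hμ]
  rcases (norm_nonneg (G y₁ - G y₂)).eq_or_lt with h | h
  · rw [← h, zero_mul]
    exact norm_nonneg _
  · nlinarith

lemma hasGradientAt_of_subgradient_of_continuousAt [CompleteSpace E] {φ : E → ℝ} {G : E → E}
    {y : E} (hsub : ∀ a b, φ a + ⟪G a, b - a⟫ ≤ φ b) (hG : ContinuousAt G y) :
    HasGradientAt φ (G y) y := by
  rw [hasGradientAt_iff_isLittleO_nhds_zero, Asymptotics.isLittleO_iff]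
  intro c hc
  have hshift : Tendsto (fun h => y + h) (𝓝 0) (𝓝 y) :=
    (continuous_const_add y).tendsto' 0 y (add_zero y)
  filter_upwards [(hG.tendsto.comp hshift).eventually (Metric.closedBall_mem_nhds (G y) hc)]
    with h hh
  rw [Function.comp_apply, dist_eq_norm] at hh
  have hlower := hsub y (y + h)
  have hupper := hsub (y + h) y
  rw [add_sub_cancel_left] at hlower
  rw [sub_add_cancel_left, inner_neg_right] at hupper
  have hcs : ⟪G (y + h) - G y, h⟫ ≤ ‖G (y + h) - G y‖ * ‖h‖ := real_inner_le_norm _ _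
  rw [inner_sub_left] at hcs
  rw [Real.norm_eq_abs, abs_le]
  constructor
  · linarith [mul_nonneg hc.le (norm_nonneg h)]
  · linarith [mul_le_mul_of_nonneg_right hh (norm_nonneg h)]

end InnerProductSpace

/-- The Legendre–Fenchel conjugate of a `μ`-strongly convex function is differentiable
with `(1/μ)`-Lipschitz gradient. -/
theorem conjugate_of_strongly_convex (n : ℕ)
    (f : EuclideanSpace ℝ (Fin n) → ℝ) (μ : ℝ) (hμ : 0 < μ)
    (hsc : StrongConvexOn Set.univ μ f)
    (fconj : EuclideanSpace ℝ (Fin n) → ℝ)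
    (hconj : ∀ y, fconj y = ⨆ x, ((inner ℝ y x : ℝ) - f x)) :
    ∃ G : EuclideanSpace ℝ (Fin n) → EuclideanSpace ℝ (Fin n),
      (∀ y, HasGradientAt fconj (G y) y) ∧
      ∀ y₁ y₂, ‖G y₁ - G y₂‖ ≤ (1 / μ) * ‖y₁ - y₂‖ := by
  choose G hG using fun y => (hsc.sub_inner y).exists_forall_le hμ
  have hgrowth : ∀ y x, f (G y) - ⟪y, G y⟫ + μ / 2 * ‖x - G y‖ ^ 2 ≤ f x - ⟪y, x⟫ :=
    fun y x => (hsc.sub_inner y).add_le_of_isMinOn (isMinOn_univ_iff.2 (hG y)) (mem_univ _)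
      (mem_univ x)
  have hval : ∀ y, fconj y = ⟪y, G y⟫ - f (G y) := fun y => by
    have hmax : IsGreatest (range fun x => ⟪y, x⟫ - f x) (⟪y, G y⟫ - f (G y)) :=
      ⟨mem_range_self _, forall_mem_range.2 fun x => by linarith [hG y x]⟩
    rw [hconj y, hmax.isLUB.ciSup_eq]
  have hsub : ∀ y z, fconj y + ⟪G y, z - y⟫ ≤ fconj z := fun y z => by
    rw [hval, hval, inner_sub_right, real_inner_comm z (G y), real_inner_comm y (G y)]
    linarith [hG z (G y)]
  have hlip := norm_sub_le_of_quadratic_growth hμ hgrowth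
  have hcont : Continuous G :=
    (LipschitzWith.of_dist_le' fun a b => by simpa only [dist_eq_norm] using hlip a b).continuous
  exact ⟨G, fun y => hasGradientAt_of_subgradient_of_continuousAt hsub hcont.continuousAt, hlip⟩
end

section
/- (Hölder gradient gives an inexact smooth oracle) Let f be convex with ν-Hölder continuous gradient: ‖∇f(x) − ∇f(y)‖₂ ≤ L_ν ‖x − y‖₂^ν for some ν ∈ (0,1]. Then for every δ > 0, taking L = L_ν · [L_ν(1−ν)/(2δ(1+ν))]^{(1−ν)/(1+ν)}, one has for all x, y: f(y) ≤ f(x) + ⟨∇f(x), y − x⟩ + (L/2)‖y − x‖₂² + δ. -/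
/-!
Along the segment from `x` to `y`, the first-order Taylor remainder has derivative at most
`Lν t^ν ‖y - x‖^(1+ν)`, so the remainder is at most `Lν/(1+ν) ‖y - x‖^(1+ν)`. Weighted AM-GM with
weights `(1 ± ν)/2` applied to `L r²/(1+ν)` and `2δ/(1-ν)` trades this power for `L/2 r² + δ`;
`L` is exactly the constant that makes the geometric mean equal to `Lν/(1+ν) r^(1+ν)`.
-/

open Set

theorem norm_sub_sub_fderiv_le_of_holder {E F : Type*} [NormedAddCommGroup E] [NormedSpace ℝ E]
    [NormedAddCommGroup F] [NormedSpace ℝ F] {f : E → F} {f' : E → E →L[ℝ] F} {ν C : ℝ}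
    (hν : 0 ≤ ν) (hf : ∀ x, HasFDerivAt f (f' x) x)
    (hholder : ∀ x y, ‖f' x - f' y‖ ≤ C * ‖x - y‖ ^ ν) (x y : E) :
    ‖f y - f x - f' x (y - x)‖ ≤ C / (1 + ν) * ‖y - x‖ ^ (1 + ν) := by
  set v := y - x
  have hν1 : 0 < 1 + ν := by linarith
  set φ : ℝ → F := fun t => f (x + t • v) - f x - t • f' x v
  have hφ : ∀ t, HasDerivAt φ (f' (x + t • v) v - f' x v) t := by
    intro t
    have hline : HasDerivAt (fun s : ℝ => x + s • v) v t := by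
      simpa using ((hasDerivAt_id t).smul_const v).const_add x
    have hlin : HasDerivAt (fun s : ℝ => s • f' x v) (f' x v) t := by
      simpa using (hasDerivAt_id t).smul_const (f' x v)
    exact (((hf _).comp_hasDerivAt t hline).sub_const (f x)).sub hlin
  set K := C / (1 + ν) * ‖v‖ ^ (1 + ν) with hK
  have hB : ∀ t, HasDerivAt (fun s : ℝ => K * s ^ (1 + ν)) (K * ((1 + ν) * t ^ ν)) t := by
    intro t
    simpa using (Real.hasDerivAt_rpow_const (x := t) (Or.inr (by linarith : 1 ≤ 1 + ν))).const_mul K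
  have hbound : ∀ t ∈ Ico (0 : ℝ) 1, ‖f' (x + t • v) v - f' x v‖ ≤ K * ((1 + ν) * t ^ ν) := by
    rintro t ⟨ht0, -⟩
    calc ‖f' (x + t • v) v - f' x v‖ = ‖(f' (x + t • v) - f' x) v‖ := rfl
      _ ≤ ‖f' (x + t • v) - f' x‖ * ‖v‖ := ContinuousLinearMap.le_opNorm _ _
      _ ≤ C * ‖t • v‖ ^ ν * ‖v‖ := by
          gcongr
          simpa using hholder (x + t • v) x
      _ = K * ((1 + ν) * t ^ ν) := by
          rw [norm_smul, Real.norm_of_nonneg ht0, Real.mul_rpow ht0 (norm_nonneg v), hK,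
            Real.rpow_add' (norm_nonneg v) hν1.ne', Real.rpow_one]
          field_simp
  have := image_norm_le_of_norm_deriv_right_le_deriv_boundary
    (fun t _ => (hφ t).continuousAt.continuousWithinAt)
    (fun t _ => (hφ t).hasDerivWithinAt) (by simp [φ, Real.zero_rpow hν1.ne']) hB hbound
    (right_mem_Icc.2 zero_le_one)
  simpa [φ, v] using this

noncomputable def holderSmoothnessConstant (ν Lν δ : ℝ) : ℝ :=
  Lν * (Lν * (1 - ν) / (2 * δ * (1 + ν))) ^ ((1 - ν) / (1 + ν))

theorem holderSmoothnessConstant_div_rpow_mul {ν Lν δ : ℝ} (hν0 : 0 < ν) (hν1 : ν < 1)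
    (hLν : 0 < Lν) (hδ : 0 < δ) :
    (holderSmoothnessConstant ν Lν δ / (1 + ν)) ^ ((1 + ν) / 2) * (2 * δ / (1 - ν)) ^ ((1 - ν) / 2)
      = Lν / (1 + ν) := by
  set κ := Lν / (1 + ν)
  set c := 2 * δ / (1 - ν)
  have hκ : 0 < κ := by positivity
  have hc : 0 < c := div_pos (by positivity) (by linarith)
  have hL : holderSmoothnessConstant ν Lν δ / (1 + ν) = κ * (κ / c) ^ ((1 - ν) / (1 + ν)) := by
    rw [holderSmoothnessConstant, show Lν * (1 - ν) / (2 * δ * (1 + ν)) = κ / c by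
      simp only [κ, c]; field_simp [show 1 - ν ≠ 0 by linarith]]
    ring
  calc (holderSmoothnessConstant ν Lν δ / (1 + ν)) ^ ((1 + ν) / 2) * c ^ ((1 - ν) / 2)
      = κ ^ ((1 + ν) / 2) * ((κ / c) ^ ((1 - ν) / 2) * c ^ ((1 - ν) / 2)) := by
        rw [hL, Real.mul_rpow hκ.le (by positivity), ← Real.rpow_mul (by positivity)]
        field_simp
    _ = κ ^ ((1 + ν) / 2 + (1 - ν) / 2) := by
        rw [Real.div_rpow hκ.le hc.le, div_mul_cancel₀ _ (by positivity), Real.rpow_add hκ]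
    _ = κ := by rw [show (1 + ν) / 2 + (1 - ν) / 2 = 1 by ring, Real.rpow_one]

theorem mul_rpow_one_add_le_holderSmoothnessConstant {ν Lν δ r : ℝ} (hν : ν ∈ Ioc 0 1)
    (hLν : 0 < Lν) (hδ : 0 < δ) (hr : 0 ≤ r) :
    Lν / (1 + ν) * r ^ (1 + ν) ≤ holderSmoothnessConstant ν Lν δ / 2 * r ^ 2 + δ := by
  obtain ⟨hν0, hν1⟩ := hν
  rcases hν1.lt_or_eq with hν1 | rfl
  · set L := holderSmoothnessConstant ν Lν δ
    have hL : 0 ≤ L := mul_nonneg hLν.le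
      (Real.rpow_nonneg (div_nonneg (mul_nonneg hLν.le (by linarith)) (by positivity)) _)
    have hamgm := Real.geom_mean_le_arith_mean2_weighted (w₁ := (1 + ν) / 2) (w₂ := (1 - ν) / 2)
      (p₁ := L / (1 + ν) * r ^ 2) (p₂ := 2 * δ / (1 - ν))
      (by positivity) (by linarith) (by positivity) (div_nonneg (by positivity) (by linarith))
      (by ring)
    have hsq : (r ^ 2) ^ ((1 + ν) / 2) = r ^ (1 + ν) := by
      rw [← Real.rpow_natCast, ← Real.rpow_mul hr]
      ring_nf
    calc Lν / (1 + ν) * r ^ (1 + ν)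
        = (L / (1 + ν) * r ^ 2) ^ ((1 + ν) / 2) * (2 * δ / (1 - ν)) ^ ((1 - ν) / 2) := by
          rw [Real.mul_rpow (by positivity) (by positivity), hsq, mul_right_comm,
            holderSmoothnessConstant_div_rpow_mul hν0 hν1 hLν hδ]
      _ ≤ (1 + ν) / 2 * (L / (1 + ν) * r ^ 2) + (1 - ν) / 2 * (2 * δ / (1 - ν)) := hamgm
      _ = L / 2 * r ^ 2 + δ := by field_simp [show 1 - ν ≠ 0 by linarith]
  · -- `Real.rpow` has `0 ^ 0 = 1`
    have hL : holderSmoothnessConstant 1 Lν δ = Lν := by simp [holderSmoothnessConstant]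
    rw [hL, show (1 : ℝ) + 1 = (2 : ℕ) by norm_num, Real.rpow_natCast]
    linarith

theorem holder_gradient_inexact_oracle_general (n : ℕ)
    (f : EuclideanSpace ℝ (Fin n) → ℝ)
    (g : EuclideanSpace ℝ (Fin n) → EuclideanSpace ℝ (Fin n))
    (ν Lν δ : ℝ) (hν : ν ∈ Set.Ioc (0 : ℝ) 1) (hLν : 0 < Lν) (hδ : 0 < δ)
    (hgrad : ∀ x, HasGradientAt f (g x) x)
    (hholder : ∀ x y, ‖g x - g y‖ ≤ Lν * ‖x - y‖ ^ ν)
    (L : ℝ)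
    (hL : L = Lν * (Lν * (1 - ν) / (2 * δ * (1 + ν))) ^ ((1 - ν) / (1 + ν))) :
    ∀ x y, f y ≤ f x + (inner ℝ (g x) (y - x) : ℝ) + L / 2 * ‖y - x‖ ^ 2 + δ := by
  intro x y
  have hdual_holder : ∀ x y,
      ‖InnerProductSpace.toDual ℝ _ (g x) - InnerProductSpace.toDual ℝ _ (g y)‖
        ≤ Lν * ‖x - y‖ ^ ν := fun x y => by
    rw [← map_sub, LinearIsometryEquiv.norm_map]
    exact hholder x y
  have hremainder := norm_sub_sub_fderiv_le_of_holder hν.1.le (fun x => (hgrad x).hasFDerivAt)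
    hdual_holder x y
  rw [InnerProductSpace.toDual_apply_apply, Real.norm_eq_abs] at hremainder
  have hyoung : Lν / (1 + ν) * ‖y - x‖ ^ (1 + ν) ≤ L / 2 * ‖y - x‖ ^ 2 + δ :=
    hL ▸ mul_rpow_one_add_le_holderSmoothnessConstant hν hLν hδ (norm_nonneg _)
  linarith [le_abs_self (f y - f x - inner ℝ (g x) (y - x))]

/-- A convex function with `ν`-Hölder continuous gradient admits a `(δ, L)`-inexact
smooth oracle with `L = L_ν (L_ν(1−ν)/(2δ(1+ν)))^{(1−ν)/(1+ν)}`. -/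
theorem holder_gradient_inexact_oracle (n : ℕ)
    (f : EuclideanSpace ℝ (Fin n) → ℝ)
    (g : EuclideanSpace ℝ (Fin n) → EuclideanSpace ℝ (Fin n))
    (ν Lν δ : ℝ) (hν : ν ∈ Set.Ioc (0 : ℝ) 1) (hLν : 0 < Lν) (hδ : 0 < δ)
    (hconv : ConvexOn ℝ Set.univ f)
    (hgrad : ∀ x, HasGradientAt f (g x) x)
    (hholder : ∀ x y, ‖g x - g y‖ ≤ Lν * ‖x - y‖ ^ ν)
    (L : ℝ)
    (hL : L = Lν * (Lν * (1 - ν) / (2 * δ * (1 + ν))) ^ ((1 - ν) / (1 + ν))) :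
    ∀ x y, f y ≤ f x + (inner ℝ (g x) (y - x) : ℝ) + L / 2 * ‖y - x‖ ^ 2 + δ :=
  holder_gradient_inexact_oracle_general n f g ν Lν δ hν hLν hδ hgrad hholder L hL
end
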